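/- The Baire partial quasi-metric space (Σ^∞, q_B) over an ordered alphabet (Σ, ⪯) is complete; that is, the quasi-metric space (Σ^∞, d_{q_B}) with d_{q_B}(x,y) = q_B(x,y) - q_B(x,x) is bicomplete. -/

import Mathlib

open scoped NNReal ENNReal

/-- A nonempty finite or infinite word over an alphabet `α`: letters are indexed
from `1`, the domain of defined letters is an initial segment. -/
structure PWord (α : Type*) where
  toFun : ℕ → Option α
  map_zero' : toFun 0 = none
  map_one' : (toFun 1).isSome = true
  mono' : ∀ n, 1 ≤ n → (toFun (n + 1)).isSome = true → (toFun n).isSome = true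

/-- The length `l(x) ∈ [1,∞]` of a word. -/
noncomputable def PWord.len {α : Type*} (x : PWord α) : ℕ∞ :=
  ⨆ n ∈ {n : ℕ | (x.toFun n).isSome = true}, (n : ℕ∞)

/-- `l_⪯(x,y) = sup{n ∈ ℕ : x_k ⪯ y_k for all k ≤ n}` (and `0` if `x₁ ⋠ y₁`). -/
noncomputable def lcpLe {α : Type*} [PartialOrder α] (x y : PWord α) : ℕ∞ :=
  ⨆ n ∈ {n : ℕ | ∀ k, 1 ≤ k → k ≤ n →
      ∃ s t, x.toFun k = some s ∧ y.toFun k = some t ∧ s ≤ t}, (n : ℕ∞)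

/-- `2^{-m}` for `m ∈ ℕ∞`, with `2^{-∞} = 0`. -/
noncomputable def epow (m : ℕ∞) : ℝ≥0 := WithTop.recTopCoe 0 (fun n => 2⁻¹ ^ n) m

/-- The Baire partial quasi-metric `q_B(x,y) = 2^{-l_⪯(x,y)}`. -/
noncomputable def qB {α : Type*} [PartialOrder α] (x y : PWord α) : ℝ≥0 :=
  epow (lcpLe x y)

/-- The quasi-metric induced by `q_B`: `d_{q_B}(x,y) = q_B(x,y) - q_B(x,x)`. -/
noncomputable def dqB {α : Type*} [PartialOrder α] (x y : PWord α) : ℝ≥0 :=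
  qB x y - qB x x

/-!
`max (d x y) (d y x) < 2⁻¹ ^ n` forces `x ⪯ y` and `y ⪯ x` letterwise on the first `n` letters
(or on the whole words, if shorter), hence `x` and `y` agree there by antisymmetry; conversely,
agreement on the first `n` letters gives `max (d x y) (d y x) ≤ 2⁻¹ ^ n`. So along a Cauchy
sequence every letter is eventually constant, and the word of eventual letters is the limit.
-/

open Filter

lemma natCast_le_biSup_iff {S : Set ℕ} (hS : ∀ m n, 1 ≤ m → m ≤ n → n ∈ S → m ∈ S)
    {n : ℕ} (hn : 1 ≤ n) : (n : ℕ∞) ≤ ⨆ m ∈ S, (m : ℕ∞) ↔ n ∈ S := by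
  refine ⟨fun h => ?_, fun h => le_biSup _ h⟩
  by_contra hnS
  have hlt : (⨆ m ∈ S, (m : ℕ∞)) ≤ (n - 1 : ℕ) := iSup₂_le fun m hm => by
    have : m < n := lt_of_not_ge fun hnm => hnS (hS n m hn hnm hm)
    exact_mod_cast Nat.le_sub_one_of_lt this
  have : n ≤ n - 1 := by exact_mod_cast h.trans hlt
  omega

lemma half_pow_sub_half_pow_succ (n : ℕ) : (2⁻¹ : ℝ≥0) ^ n - 2⁻¹ ^ (n + 1) = 2⁻¹ ^ (n + 1) := by
  refine tsub_eq_of_eq_add ?_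
  rw [← two_mul, pow_succ, mul_left_comm, mul_inv_cancel₀ two_ne_zero, mul_one]

@[simp] lemma epow_top : epow ⊤ = 0 := rfl

@[simp] lemma epow_coe (n : ℕ) : epow n = 2⁻¹ ^ n := rfl

lemma epow_le_half_pow_iff {m : ℕ∞} {k : ℕ} : epow m ≤ 2⁻¹ ^ k ↔ (k : ℕ∞) ≤ m := by
  induction m using ENat.recTopCoe with
  | top => simp
  | coe n =>
    rw [epow_coe, Nat.cast_le, pow_le_pow_iff_right_of_lt_one₀ (by norm_num) (by norm_num)]

namespace PWord

variable {α : Type*}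

lemma natCast_le_len_iff (x : PWord α) {n : ℕ} (hn : 1 ≤ n) :
    (n : ℕ∞) ≤ x.len ↔ (x.toFun n).isSome := by
  refine natCast_le_biSup_iff (fun m n hm hmn hn => ?_) hn
  induction n, hmn using Nat.le_induction with
  | base => exact hn
  | succ n hmn ih => exact ih (x.mono' n (hm.trans hmn) hn)

lemma toFun_eq_none_of_len_lt (x : PWord α) {n : ℕ} (h : x.len < n) : x.toFun n = none := by
  rcases Nat.eq_zero_or_pos n with rfl | hn
  · exact x.map_zero'
  · rw [← Option.not_isSome_iff_eq_none, ← x.natCast_le_len_iff hn]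
    exact h.not_ge

def ofEventuallyEq {ι : Type*} {l : Filter ι} [l.NeBot] (x : ι → PWord α) (f : ℕ → Option α)
    (h : ∀ j, ∀ᶠ i in l, (x i).toFun j = f j) : PWord α where
  toFun := f
  map_zero' := by
    obtain ⟨i, hi⟩ := (h 0).exists
    exact hi ▸ (x i).map_zero'
  map_one' := by
    obtain ⟨i, hi⟩ := (h 1).exists
    exact hi ▸ (x i).map_one'
  mono' n hn hsucc := by
    obtain ⟨i, hi, hi'⟩ := ((h n).and (h (n + 1))).exists
    exact hi ▸ (x i).mono' n hn (hi' ▸ hsucc)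

end PWord

section Baire

variable {α : Type*} [PartialOrder α] {x y : PWord α} {n : ℕ}

lemma natCast_le_lcpLe_iff (hn : 1 ≤ n) : (n : ℕ∞) ≤ lcpLe x y ↔
    ∀ k, 1 ≤ k → k ≤ n → ∃ s t, x.toFun k = some s ∧ y.toFun k = some t ∧ s ≤ t := by
  refine natCast_le_biSup_iff ?_ hn
  intro a b _ hab hb k hk hka
  exact hb k hk (hka.trans hab)

lemma lcpLe_le_len_left (x y : PWord α) : lcpLe x y ≤ x.len :=
  iSup₂_le fun n hn => by
    rcases Nat.eq_zero_or_pos n with rfl | hn1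
    · simp
    · obtain ⟨s, t, hs, -, -⟩ := hn n hn1 le_rfl
      simp [x.natCast_le_len_iff hn1, hs]

lemma lcpLe_le_len_right (x y : PWord α) : lcpLe x y ≤ y.len :=
  iSup₂_le fun n hn => by
    rcases Nat.eq_zero_or_pos n with rfl | hn1
    · simp
    · obtain ⟨s, t, -, ht, -⟩ := hn n hn1 le_rfl
      simp [y.natCast_le_len_iff hn1, ht]

lemma lcpLe_self (x : PWord α) : lcpLe x x = x.len := by
  refine le_antisymm (lcpLe_le_len_left x x) (iSup₂_le fun n hn => le_biSup _ ?_)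
  intro k hk hkn
  obtain ⟨s, hs⟩ := Option.isSome_iff_exists.mp
    ((x.natCast_le_len_iff hk).mp ((Nat.cast_le.mpr hkn).trans (le_biSup _ hn)))
  exact ⟨s, s, hs, hs, le_rfl⟩

lemma dqB_eq (x y : PWord α) : dqB x y = epow (lcpLe x y) - epow x.len := by
  simp only [dqB, qB, lcpLe_self]

lemma toFun_eq_of_natCast_le_lcpLe {j : ℕ} (hxy : (j : ℕ∞) ≤ lcpLe x y)
    (hyx : (j : ℕ∞) ≤ lcpLe y x) : x.toFun j = y.toFun j := by
  rcases Nat.eq_zero_or_pos j with rfl | hj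
  · rw [x.map_zero', y.map_zero']
  obtain ⟨s, t, hs, ht, hst⟩ := (natCast_le_lcpLe_iff hj).mp hxy j hj le_rfl
  obtain ⟨t', s', ht', hs', hts⟩ := (natCast_le_lcpLe_iff hj).mp hyx j hj le_rfl
  obtain rfl : s' = s := Option.some_injective _ (hs'.symm.trans hs)
  obtain rfl : t' = t := Option.some_injective _ (ht'.symm.trans ht)
  rw [hs, ht, le_antisymm hst hts]

/-- A first failure of `⪯` at a letter `L + 1 ≤ l(x)` already costs
`2⁻¹ ^ L - 2⁻¹ ^ (L + 1) = 2⁻¹ ^ (L + 1)`. -/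
lemma min_le_lcpLe_of_dqB_lt (h : dqB x y < 2⁻¹ ^ n) : min (n : ℕ∞) x.len ≤ lcpLe x y := by
  by_contra! hlt
  obtain ⟨L, hL⟩ := ENat.ne_top_iff_exists.mp (hlt.trans_le (min_le_left _ _)).ne_top
  rw [← hL, lt_min_iff] at hlt
  have hLn : L + 1 ≤ n := by exact_mod_cast Order.add_one_le_of_lt hlt.1
  have hLx : ((L + 1 : ℕ) : ℕ∞) ≤ x.len := by exact_mod_cast Order.add_one_le_of_lt hlt.2
  refine h.not_ge ?_
  calc (2⁻¹ : ℝ≥0) ^ n ≤ 2⁻¹ ^ (L + 1) := pow_le_pow_of_le_one (by norm_num) (by norm_num) hLn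
    _ = 2⁻¹ ^ L - 2⁻¹ ^ (L + 1) := (half_pow_sub_half_pow_succ L).symm
    _ ≤ 2⁻¹ ^ L - epow x.len := tsub_le_tsub_left (epow_le_half_pow_iff.mpr hLx) _
    _ = dqB x y := by rw [dqB_eq, ← hL]; rfl

lemma dqB_le_of_min_le_lcpLe (h : min (n : ℕ∞) x.len ≤ lcpLe x y) : dqB x y ≤ 2⁻¹ ^ n := by
  rcases le_total (n : ℕ∞) x.len with hn | hx
  · rw [min_eq_left hn] at h
    exact (dqB_eq x y ▸ tsub_le_self).trans (epow_le_half_pow_iff.mpr h)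
  · rw [min_eq_right hx] at h
    simp [dqB_eq, le_antisymm (lcpLe_le_len_left x y) h]

lemma eqOn_of_min_le_lcpLe (hxy : min (n : ℕ∞) x.len ≤ lcpLe x y)
    (hyx : min (n : ℕ∞) y.len ≤ lcpLe y x) : Set.EqOn x.toFun y.toFun (Set.Iic n) := by
  have hmin : min (n : ℕ∞) x.len = min (n : ℕ∞) y.len :=
    le_antisymm (le_min (min_le_left _ _) (hxy.trans (lcpLe_le_len_right x y)))
      (le_min (min_le_left _ _) (hyx.trans (lcpLe_le_len_right y x)))
  intro j (hj : j ≤ n)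
  rcases le_or_gt (j : ℕ∞) (min n x.len) with hjm | hjm
  · exact toFun_eq_of_natCast_le_lcpLe (hjm.trans hxy) ((hmin ▸ hjm).trans hyx)
  · have hnj : ¬ (n : ℕ∞) < j := by exact_mod_cast hj.not_gt
    have hx : x.len < j := (min_lt_iff.mp hjm).resolve_left hnj
    have hy : y.len < j := (min_lt_iff.mp (hmin ▸ hjm)).resolve_left hnj
    rw [x.toFun_eq_none_of_len_lt hx, y.toFun_eq_none_of_len_lt hy]

lemma min_le_lcpLe_of_eqOn (h : Set.EqOn x.toFun y.toFun (Set.Iic n)) :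
    min (n : ℕ∞) x.len ≤ lcpLe x y := by
  refine ENat.forall_natCast_le_iff_le.mp fun m hm => ?_
  rcases Nat.eq_zero_or_pos m with rfl | hm1
  · simp
  rw [natCast_le_lcpLe_iff hm1]
  intro k hk hkm
  have hkm' : (k : ℕ∞) ≤ min (n : ℕ∞) x.len := (Nat.cast_le.mpr hkm).trans hm
  have hkn : k ≤ n := by exact_mod_cast hkm'.trans (min_le_left _ _)
  obtain ⟨s, hs⟩ := Option.isSome_iff_exists.mp
    ((x.natCast_le_len_iff hk).mp (hkm'.trans (min_le_right _ _)))
  exact ⟨s, s, hs, (h hkn).symm.trans hs, le_rfl⟩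

lemma eqOn_of_max_dqB_lt (h : max (dqB x y) (dqB y x) < 2⁻¹ ^ n) :
    Set.EqOn x.toFun y.toFun (Set.Iic n) :=
  eqOn_of_min_le_lcpLe (min_le_lcpLe_of_dqB_lt ((le_max_left _ _).trans_lt h))
    (min_le_lcpLe_of_dqB_lt ((le_max_right _ _).trans_lt h))

lemma max_dqB_le_of_eqOn (h : Set.EqOn x.toFun y.toFun (Set.Iic n)) :
    max (dqB x y) (dqB y x) ≤ 2⁻¹ ^ n :=
  max_le (dqB_le_of_min_le_lcpLe (min_le_lcpLe_of_eqOn h))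
    (dqB_le_of_min_le_lcpLe (min_le_lcpLe_of_eqOn h.symm))

end Baire

theorem baire_stmt16_general {α : Type*} [PartialOrder α]
    (x : ℕ → PWord α)
    (hcauchy : ∀ ε : ℝ≥0, 0 < ε → ∃ N, ∀ m n, N ≤ m → N ≤ n →
      max (dqB (x m) (x n)) (dqB (x n) (x m)) < ε) :
    ∃ l : PWord α, ∀ ε : ℝ≥0, 0 < ε → ∃ N, ∀ n, N ≤ n →
      max (dqB l (x n)) (dqB (x n) l) < ε := by
  have hstab : ∀ j, ∃ N, ∀ m, N ≤ m → (x m).toFun j = (x N).toFun j := fun j => by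
    obtain ⟨N, hN⟩ := hcauchy (2⁻¹ ^ j) (pow_pos (by norm_num) j)
    exact ⟨N, fun m hm => eqOn_of_max_dqB_lt (hN m N hm le_rfl) (Set.mem_Iic.mpr le_rfl)⟩
  choose N hN using hstab
  have hlim : ∀ j, ∀ᶠ m in atTop, (x m).toFun j = (x (N j)).toFun j :=
    fun j => eventually_atTop.mpr ⟨N j, hN j⟩
  refine ⟨PWord.ofEventuallyEq x _ hlim, fun ε hε => ?_⟩
  obtain ⟨n, hn⟩ := NNReal.exists_pow_lt_of_lt_one hε (by norm_num : (2⁻¹ : ℝ≥0) < 1)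
  obtain ⟨M, hM⟩ := eventually_atTop.mp
    ((eventually_all_finite (Set.finite_Iic n)).mpr fun j _ => hlim j)
  exact ⟨M, fun m hm => (max_dqB_le_of_eqOn fun j hj => (hM m hm j hj).symm).trans_lt hn⟩

/-- the Baire partial quasi-metric space `(Σ^∞, q_B)` is complete:
the symmetrized metric `d_{q_B}ˢ(x,y) = max(d_{q_B}(x,y), d_{q_B}(y,x))` is a
complete metric, i.e. `(Σ^∞, d_{q_B})` is bicomplete. -/
theorem baire_stmt16 {α : Type*} [Nonempty α] [PartialOrder α]
    (x : ℕ → PWord α)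
    (hcauchy : ∀ ε : ℝ≥0, 0 < ε → ∃ N, ∀ m n, N ≤ m → N ≤ n →
      max (dqB (x m) (x n)) (dqB (x n) (x m)) < ε) :
    ∃ l : PWord α, ∀ ε : ℝ≥0, 0 < ε → ∃ N, ∀ n, N ≤ n →
      max (dqB l (x n)) (dqB (x n) l) < ε :=
  baire_stmt16_general x hcauchy
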